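/- Let m > 0 and p ≠ 0 with p < m, let N > 0, θ > 0, σ > 0 and μ ∈ ℝ. Let X and W be independent with X ~ Exp(μ, σ/m) and W ~ Gamma(N, θ). Then the function φ ↦ E[exp(p(X + φ·W − μ)/σ) − p(X + φ·W − μ)/σ − 1] is finite on {φ ∈ ℝ : p·φ·θ/σ < 1} and attains a strict global minimum there at φ* = (σ/(p·θ))·(1 − (m/(m−p))^{1/(N+1)}). -/

import Mathlib

/-!
Write `X = μ + Y`: then `Y ~ Gamma(1, σ/m)` is independent of `W ~ Gamma(N, θ)`. The Linex risk of
`X + φW` is `E e^{p(Y+φW)/σ} - p E(Y+φW)/σ - 1`, and the gamma moment generating function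
`E e^{cW} = (1 - cθ)^{-N}` together with independence turns it into
`A u^{-N} + N u - (N + 1 + p/m)` with `A = m/(m-p)` and `u = 1 - pφθ/σ > 0`.
Weighted AM-GM with weights `1/(N+1)` and `N/(N+1)` applied to `A u^{-N}` and `u` bounds this
from below by `(N+1) A^{1/(N+1)} - (N + 1 + p/m)`, with equality exactly when `u^{N+1} = A`,
that is at `φ = φ*`.
-/

open MeasureTheory ProbabilityTheory Real
open scoped ENNReal

/-- Two-parameter exponential distribution `Exp(μ, θ)` with location `μ` and scale `θ`. -/
noncomputable def expLocMeasure (μ θ : ℝ) : Measure ℝ :=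
  volume.withDensity fun x =>
    ENNReal.ofReal (if μ < x then θ⁻¹ * Real.exp (-(x - μ) / θ) else 0)

/-- Gamma distribution `Gamma(a, θ)` with shape `a` and scale `θ`. -/
noncomputable def gammaScaleMeasure (a θ : ℝ) : Measure ℝ :=
  volume.withDensity fun x =>
    ENNReal.ofReal (if 0 < x then x ^ (a - 1) * Real.exp (-x / θ) / (Real.Gamma a * θ ^ a) else 0)

/-- The Linex loss `e^{pt} - pt - 1`. -/
noncomputable def linexLoss (p t : ℝ) : ℝ := Real.exp (p * t) - p * t - 1

/-- The Linex risk of an estimator `δ` of a location parameter `μ` at scale `σ`,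
with values in `[0, ∞]`. -/
noncomputable def linexRisk {Ω : Type*} [MeasurableSpace Ω] (P : Measure Ω)
    (p μ σ : ℝ) (δ : Ω → ℝ) : ℝ≥0∞ :=
  ∫⁻ ω, ENNReal.ofReal (linexLoss p ((δ ω - μ) / σ)) ∂P

open Set

theorem map_add_right_withDensity {G : Type*} [MeasurableSpace G] [AddGroup G] [MeasurableAdd G]
    (ν : Measure G) [ν.IsAddRightInvariant] (g : G → ℝ≥0∞) (c : G) :
    (ν.withDensity g).map (· + c) = ν.withDensity fun x => g (x - c) := by
  ext s hs
  have hpre : MeasurableSet ((· + c) ⁻¹' s) := measurable_add_const c hs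
  rw [Measure.map_apply (measurable_add_const c) hs, withDensity_apply _ hpre,
    withDensity_apply _ hs, ← lintegral_indicator hpre, ← lintegral_indicator hs,
    ← lintegral_add_right_eq_self (s.indicator fun x => g (x - c)) c]
  congr with x
  simp only [indicator, add_sub_cancel_right]
  rfl

section WithDensity

variable {α : Type*} [MeasurableSpace α] {ν : Measure α} {d : α → ℝ}

theorem integral_withDensity_ofReal (hd : Measurable d) (hd0 : 0 ≤ᵐ[ν] d) (f : α → ℝ) :
    ∫ x, f x ∂ν.withDensity (fun x => ENNReal.ofReal (d x)) = ∫ x, d x * f x ∂ν := by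
  rw [integral_withDensity_eq_integral_toReal_smul hd.ennreal_ofReal
    (ae_of_all _ fun _ => ENNReal.ofReal_lt_top)]
  refine integral_congr_ae (hd0.mono fun x hx => ?_)
  simp [ENNReal.toReal_ofReal hx]

theorem integrable_withDensity_ofReal_iff (hd : Measurable d) (hd0 : 0 ≤ᵐ[ν] d) {f : α → ℝ} :
    Integrable f (ν.withDensity fun x => ENNReal.ofReal (d x)) ↔
      Integrable (fun x => d x * f x) ν := by
  rw [integrable_withDensity_iff_integrable_smul' hd.ennreal_ofReal
    (ae_of_all _ fun _ => ENNReal.ofReal_lt_top)]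
  refine integrable_congr (hd0.mono fun x hx => ?_)
  simp [ENNReal.toReal_ofReal hx]

end WithDensity

theorem gammaScaleMeasure_one_eq_map_expLocMeasure (μ s : ℝ) :
    gammaScaleMeasure 1 s = (expLocMeasure μ s).map (· - μ) := by
  simp only [sub_eq_add_neg, expLocMeasure, map_add_right_withDensity, gammaScaleMeasure]
  congr with x
  simp [inv_mul_eq_div]

theorem ProbabilityTheory.HasLaw.integrable_comp {Ω 𝓧 : Type*} [MeasurableSpace Ω]
    [MeasurableSpace 𝓧] {P : Measure Ω} {μ : Measure 𝓧} {X : Ω → 𝓧} (hX : HasLaw X μ P)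
    {f : 𝓧 → ℝ} (hf : Integrable f μ) : Integrable (fun ω => f (X ω)) P := by
  rw [← hX.map_eq] at hf
  exact hf.comp_aemeasurable hX.aemeasurable

theorem ProbabilityTheory.HasLaw.sub_const_of_expLocMeasure {Ω : Type*} [MeasurableSpace Ω]
    {P : Measure Ω} {X : Ω → ℝ} {μ s : ℝ} (hX : HasLaw X (expLocMeasure μ s) P) :
    HasLaw (fun ω => X ω - μ) (gammaScaleMeasure 1 s) P :=
  HasLaw.fun_comp (Y := (· - μ))
    ⟨(measurable_sub_const μ).aemeasurable, (gammaScaleMeasure_one_eq_map_expLocMeasure μ s).symm⟩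
    hX

theorem integrableOn_rpow_mul_exp_neg_mul_Ioi {s r : ℝ} (hs : 0 < s) (hr : 0 < r) :
    IntegrableOn (fun x => x ^ (s - 1) * exp (-(r * x))) (Ioi 0) := by
  simpa [neg_mul] using
    integrableOn_rpow_mul_exp_neg_mul_rpow (s := s - 1) (by linarith) one_pos hr

noncomputable def gammaScaleDensity (a θ x : ℝ) : ℝ :=
  x ^ (a - 1) * exp (-x / θ) / (Gamma a * θ ^ a)

section GammaScale

variable {a θ k c : ℝ}

theorem measurable_gammaScaleDensity (a θ : ℝ) : Measurable (gammaScaleDensity a θ) := by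
  unfold gammaScaleDensity
  fun_prop

theorem gammaScaleDensity_nonneg (ha : 0 < a) (hθ : 0 < θ) {x : ℝ} (hx : 0 < x) :
    0 ≤ gammaScaleDensity a θ x := by
  have := Gamma_pos_of_pos ha
  unfold gammaScaleDensity
  positivity

theorem gammaScaleMeasure_eq_withDensity_restrict (a θ : ℝ) :
    gammaScaleMeasure a θ = (volume.restrict (Ioi 0)).withDensity
      fun x => ENNReal.ofReal (gammaScaleDensity a θ x) := by
  rw [gammaScaleMeasure, ← withDensity_indicator measurableSet_Ioi]
  congr with x
  by_cases hx : 0 < x <;> simp [hx, gammaScaleDensity]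

theorem ae_restrict_Ioi_gammaScaleDensity_nonneg (ha : 0 < a) (hθ : 0 < θ) :
    0 ≤ᵐ[volume.restrict (Ioi 0)] gammaScaleDensity a θ :=
  (ae_restrict_iff' measurableSet_Ioi).2 <| ae_of_all _ fun _ => gammaScaleDensity_nonneg ha hθ

theorem integral_gammaScaleMeasure (ha : 0 < a) (hθ : 0 < θ) (f : ℝ → ℝ) :
    ∫ x, f x ∂gammaScaleMeasure a θ = ∫ x in Ioi 0, gammaScaleDensity a θ x * f x := by
  rw [gammaScaleMeasure_eq_withDensity_restrict, integral_withDensity_ofReal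
    (measurable_gammaScaleDensity a θ) (ae_restrict_Ioi_gammaScaleDensity_nonneg ha hθ)]

theorem integrable_gammaScaleMeasure_iff (ha : 0 < a) (hθ : 0 < θ) {f : ℝ → ℝ} :
    Integrable f (gammaScaleMeasure a θ) ↔
      IntegrableOn (fun x => gammaScaleDensity a θ x * f x) (Ioi 0) := by
  rw [gammaScaleMeasure_eq_withDensity_restrict, integrable_withDensity_ofReal_iff
    (measurable_gammaScaleDensity a θ) (ae_restrict_Ioi_gammaScaleDensity_nonneg ha hθ),
    IntegrableOn]

theorem gammaScaleDensity_mul_rpow_mul_exp {x : ℝ} (hx : 0 < x) :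
    gammaScaleDensity a θ x * (x ^ k * exp (c * x)) =
      (Gamma a * θ ^ a)⁻¹ * (x ^ (a + k - 1) * exp (-((θ⁻¹ - c) * x))) := by
  rw [gammaScaleDensity, show a + k - 1 = a - 1 + k by ring, rpow_add hx,
    show -((θ⁻¹ - c) * x) = -x / θ + c * x by ring, exp_add]
  ring

theorem inv_sub_pos_of_mul_lt_one (hθ : 0 < θ) (hc : c * θ < 1) : 0 < θ⁻¹ - c := by
  rw [sub_pos, ← one_div]
  exact (lt_div_iff₀ hθ).2 hc

theorem integrable_rpow_mul_exp_gammaScaleMeasure (ha : 0 < a) (hθ : 0 < θ) (hk : -a < k)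
    (hc : c * θ < 1) : Integrable (fun x => x ^ k * exp (c * x)) (gammaScaleMeasure a θ) := by
  rw [integrable_gammaScaleMeasure_iff ha hθ]
  refine IntegrableOn.congr_fun ((integrableOn_rpow_mul_exp_neg_mul_Ioi (s := a + k)
    (by linarith) (inv_sub_pos_of_mul_lt_one hθ hc)).const_mul (Gamma a * θ ^ a)⁻¹)
      (fun x hx => ?_) measurableSet_Ioi
  rw [gammaScaleDensity_mul_rpow_mul_exp hx]

theorem integral_rpow_mul_exp_gammaScaleMeasure (ha : 0 < a) (hθ : 0 < θ) (hk : -a < k)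
    (hc : c * θ < 1) :
    ∫ x, x ^ k * exp (c * x) ∂gammaScaleMeasure a θ =
      Gamma (a + k) / Gamma a * θ ^ k * (1 - c * θ) ^ (-(a + k)) := by
  have hrate := inv_sub_pos_of_mul_lt_one hθ hc
  have hc' : 0 < 1 - c * θ := by linarith
  rw [integral_gammaScaleMeasure ha hθ,
    setIntegral_congr_fun measurableSet_Ioi fun x hx => gammaScaleDensity_mul_rpow_mul_exp hx,
    integral_const_mul, integral_rpow_mul_exp_neg_mul_Ioi (by linarith) hrate,
    show 1 / (θ⁻¹ - c) = θ * (1 - c * θ)⁻¹ by field_simp,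
    mul_rpow hθ.le (inv_nonneg.2 hc'.le), inv_rpow hc'.le, ← rpow_neg hc'.le, rpow_add hθ]
  field_simp

theorem integrable_exp_mul_gammaScaleMeasure (ha : 0 < a) (hθ : 0 < θ) (hc : c * θ < 1) :
    Integrable (fun x => exp (c * x)) (gammaScaleMeasure a θ) := by
  simpa using integrable_rpow_mul_exp_gammaScaleMeasure (k := 0) ha hθ (by linarith) hc

theorem integral_exp_mul_gammaScaleMeasure (ha : 0 < a) (hθ : 0 < θ) (hc : c * θ < 1) :
    ∫ x, exp (c * x) ∂gammaScaleMeasure a θ = (1 - c * θ) ^ (-a) := by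
  simpa [(Gamma_pos_of_pos ha).ne'] using
    integral_rpow_mul_exp_gammaScaleMeasure (k := 0) ha hθ (by linarith) hc

theorem integrable_id_gammaScaleMeasure (ha : 0 < a) (hθ : 0 < θ) :
    Integrable (fun x => x) (gammaScaleMeasure a θ) := by
  simpa using integrable_rpow_mul_exp_gammaScaleMeasure (k := 1) (c := 0) ha hθ (by linarith)
    (by simp)

theorem integral_id_gammaScaleMeasure (ha : 0 < a) (hθ : 0 < θ) :
    ∫ x, x ∂gammaScaleMeasure a θ = a * θ := by
  have h := integral_rpow_mul_exp_gammaScaleMeasure (k := 1) (c := 0) ha hθ (by linarith)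
    (by simp)
  simp only [rpow_one, zero_mul, exp_zero, mul_one, sub_zero, one_rpow,
    Gamma_add_one ha.ne'] at h
  rw [h]
  field_simp [(Gamma_pos_of_pos ha).ne']

end GammaScale

section LinexLoss

variable {Ω : Type*} [MeasurableSpace Ω] {P : Measure Ω} {p : ℝ}

theorem linexLoss_nonneg (p t : ℝ) : 0 ≤ linexLoss p t := by
  have := add_one_le_exp (p * t)
  rw [linexLoss]
  linarith

theorem linexRisk_eq_ofReal_integral {μ σ : ℝ} {δ : Ω → ℝ}
    (h : Integrable (fun ω => linexLoss p ((δ ω - μ) / σ)) P) :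
    linexRisk P p μ σ δ = ENNReal.ofReal (∫ ω, linexLoss p ((δ ω - μ) / σ) ∂P) :=
  (ofReal_integral_eq_lintegral_ofReal h (ae_of_all _ fun _ => linexLoss_nonneg _ _)).symm

variable [IsProbabilityMeasure P] {Z : Ω → ℝ}

theorem integrable_linexLoss (hZ : Integrable Z P)
    (hexp : Integrable (fun ω => exp (p * Z ω)) P) :
    Integrable (fun ω => linexLoss p (Z ω)) P :=
  (hexp.sub (hZ.const_mul p)).sub (integrable_const 1)

theorem integral_linexLoss (hZ : Integrable Z P)
    (hexp : Integrable (fun ω => exp (p * Z ω)) P) :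
    ∫ ω, linexLoss p (Z ω) ∂P = ∫ ω, exp (p * Z ω) ∂P - p * ∫ ω, Z ω ∂P - 1 := by
  have hlin : Integrable (fun ω => exp (p * Z ω) - p * Z ω) P := hexp.sub (hZ.const_mul p)
  simp only [linexLoss]
  rw [integral_sub hlin (integrable_const 1), integral_sub hexp (hZ.const_mul p),
    integral_const_mul]
  simp

end LinexLoss

theorem integrable_and_integral_linexLoss_add_mul {Ω : Type*} [MeasurableSpace Ω]
    {P : Measure Ω} [IsProbabilityMeasure P] {X W : Ω → ℝ} {μ a b s θ p σ φ : ℝ}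
    (hX : HasLaw (fun ω => X ω - μ) (gammaScaleMeasure a s) P)
    (hW : HasLaw W (gammaScaleMeasure b θ) P) (hXW : IndepFun (fun ω => X ω - μ) W P)
    (ha : 0 < a) (hb : 0 < b) (hs : 0 < s) (hθ : 0 < θ)
    (hcs : p / σ * s < 1) (hcθ : p * φ / σ * θ < 1) :
    Integrable (fun ω => linexLoss p ((X ω + φ * W ω - μ) / σ)) P ∧
    ∫ ω, linexLoss p ((X ω + φ * W ω - μ) / σ) ∂P =
      (1 - p / σ * s) ^ (-a) * (1 - p * φ / σ * θ) ^ (-b) - p * (a * s + φ * (b * θ)) / σ - 1 := by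
  have hexpX := hX.integrable_comp (integrable_exp_mul_gammaScaleMeasure ha hs hcs)
  have hexpW := hW.integrable_comp (integrable_exp_mul_gammaScaleMeasure hb hθ hcθ)
  have hexp_indep :
      IndepFun (fun ω => exp (p / σ * (X ω - μ))) (fun ω => exp (p * φ / σ * W ω)) P :=
    hXW.comp (φ := fun y => exp (p / σ * y)) (ψ := fun w => exp (p * φ / σ * w))
      (by fun_prop) (by fun_prop)
  have hexp_eq : (fun ω => exp (p * ((X ω + φ * W ω - μ) / σ))) =
      fun ω => exp (p / σ * (X ω - μ)) * exp (p * φ / σ * W ω) := by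
    funext ω
    rw [← exp_add]
    congr 1
    ring
  have hexp : Integrable (fun ω => exp (p * ((X ω + φ * W ω - μ) / σ))) P :=
    hexp_eq ▸ hexp_indep.integrable_mul hexpX hexpW
  have hX1 := hX.integrable_comp (integrable_id_gammaScaleMeasure ha hs)
  have hW1 := hW.integrable_comp (integrable_id_gammaScaleMeasure hb hθ)
  have hZ : Integrable (fun ω => (X ω + φ * W ω - μ) / σ) P := by
    refine ((hX1.add (hW1.const_mul φ)).div_const σ).congr (.of_forall fun ω => ?_)
    simp only [Pi.add_apply]
    ring
  refine ⟨integrable_linexLoss hZ hexp, ?_⟩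
  have hmgf : ∫ ω, exp (p * ((X ω + φ * W ω - μ) / σ)) ∂P =
      (1 - p / σ * s) ^ (-a) * (1 - p * φ / σ * θ) ^ (-b) := by
    have hX_mgf : ∫ ω, exp (p / σ * (X ω - μ)) ∂P = (1 - p / σ * s) ^ (-a) :=
      (hX.integral_comp (f := fun y => exp (p / σ * y)) (by fun_prop)).trans
        (integral_exp_mul_gammaScaleMeasure ha hs hcs)
    have hW_mgf : ∫ ω, exp (p * φ / σ * W ω) ∂P = (1 - p * φ / σ * θ) ^ (-b) :=
      (hW.integral_comp (f := fun w => exp (p * φ / σ * w)) (by fun_prop)).trans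
        (integral_exp_mul_gammaScaleMeasure hb hθ hcθ)
    rw [hexp_eq, hexp_indep.integral_fun_mul_eq_mul_integral hexpX.aestronglyMeasurable
      hexpW.aestronglyMeasurable, hX_mgf, hW_mgf]
  have hmean : ∫ ω, (X ω + φ * W ω - μ) / σ ∂P = (a * s + φ * (b * θ)) / σ := by
    have hX_mean : ∫ ω, (X ω - μ) ∂P = a * s :=
      hX.integral_eq.trans (integral_id_gammaScaleMeasure ha hs)
    have hW_mean : ∫ ω, W ω ∂P = b * θ :=
      hW.integral_eq.trans (integral_id_gammaScaleMeasure hb hθ)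
    rw [← hX_mean, ← hW_mean, ← integral_const_mul, ← integral_add hX1 (hW1.const_mul φ),
      ← integral_div]
    congr with ω
    ring
  rw [integral_linexLoss hZ hexp, hmgf, hmean]
  ring

theorem integrable_and_integral_linexLoss_of_expLocMeasure {Ω : Type*} [MeasurableSpace Ω]
    {P : Measure Ω} [IsProbabilityMeasure P] {X W : Ω → ℝ} {m p N θ σ μ φ : ℝ}
    (hX : HasLaw X (expLocMeasure μ (σ / m)) P) (hW : HasLaw W (gammaScaleMeasure N θ) P)
    (hXW : IndepFun X W P) (hm : 0 < m) (hpm : p < m) (hN : 0 < N) (hθ : 0 < θ) (hσ : 0 < σ)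
    (hφ : p * φ * θ / σ < 1) :
    Integrable (fun ω => linexLoss p ((X ω + φ * W ω - μ) / σ)) P ∧
    ∫ ω, linexLoss p ((X ω + φ * W ω - μ) / σ) ∂P =
      m / (m - p) * (1 - p * φ * θ / σ) ^ (-N) + N * (1 - p * φ * θ / σ) - (N + 1 + p / m) := by
  obtain ⟨hint, hval⟩ := integrable_and_integral_linexLoss_add_mul (φ := φ)
    hX.sub_const_of_expLocMeasure hW (hXW.comp (measurable_sub_const μ) measurable_id)
    one_pos hN (div_pos hσ hm) hθ
    (by rw [show p / σ * (σ / m) = p / m by field_simp, div_lt_one hm]; exact hpm)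
    (by convert hφ using 1; ring)
  refine ⟨hint, hval.trans ?_⟩
  rw [show 1 - p / σ * (σ / m) = (m - p) / m by field_simp, rpow_neg_one, inv_div,
    show p * φ / σ * θ = p * φ * θ / σ by ring]
  field_simp
  ring

theorem add_one_mul_rpow_one_div_lt {A N u : ℝ} (hA : 0 < A) (hN : 0 < N) (hu : 0 < u)
    (hne : u ≠ A ^ (1 / (N + 1))) : (N + 1) * A ^ (1 / (N + 1)) < A * u ^ (-N) + N * u := by
  have hN1 : 0 < N + 1 := by linarith
  have hgeom : (A * u ^ (-N)) ^ (1 / (N + 1)) * u ^ (N / (N + 1)) = A ^ (1 / (N + 1)) := by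
    rw [mul_rpow hA.le (rpow_nonneg hu.le _), ← rpow_mul hu.le, mul_assoc, ← rpow_add hu,
      show -N * (1 / (N + 1)) + N / (N + 1) = 0 by field_simp; ring, rpow_zero, mul_one]
  have hne' : A * u ^ (-N) ≠ u := by
    contrapose! hne
    have hA' : A = u ^ (N + 1) := by
      rw [rpow_add_one hu.ne']
      nth_rewrite 2 [← hne]
      rw [mul_left_comm, ← rpow_add hu, add_neg_cancel, rpow_zero, mul_one]
    rw [hA', ← rpow_mul hu.le, mul_one_div_cancel hN1.ne', rpow_one]
  have hamgm := (geom_mean_lt_arith_mean2_weighted_iff_of_pos (w₁ := 1 / (N + 1))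
    (w₂ := N / (N + 1)) (by positivity) (by positivity) (by positivity) hu.le
    (by field_simp; ring)).2 hne'
  rw [hgeom] at hamgm
  calc (N + 1) * A ^ (1 / (N + 1))
      < (N + 1) * (1 / (N + 1) * (A * u ^ (-N)) + N / (N + 1) * u) := by gcongr
    _ = A * u ^ (-N) + N * u := by field_simp

theorem mul_rpow_neg_add_mul_rpow_one_div {A N : ℝ} (hA : 0 < A) (hN : N + 1 ≠ 0) :
    A * (A ^ (1 / (N + 1))) ^ (-N) + N * A ^ (1 / (N + 1)) = (N + 1) * A ^ (1 / (N + 1)) := by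
  have hroot : A * (A ^ (1 / (N + 1))) ^ (-N) = A ^ (1 / (N + 1)) := by
    rw [← rpow_mul hA.le]
    nth_rewrite 1 [← rpow_one A]
    rw [← rpow_add hA]
    congr 1
    field_simp
    ring
  rw [hroot]
  ring

/-- For independent `X ~ Exp(μ, σ/m)` and `W ~ Gamma(N, θ)`, with `p < m`,
the Linex risk of `X + φ·W` is finite on `{φ : p·φ·θ/σ < 1}` and uniquely minimized there at
`φ* = (σ/(pθ))·(1 − (m/(m−p))^{1/(N+1)})`. -/
theorem stmt_16 {Ω : Type*} [MeasurableSpace Ω] (P : Measure Ω) [IsProbabilityMeasure P]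
    (m p N θ σ μ : ℝ) (hm : 0 < m) (hp : p ≠ 0) (hpm : p < m)
    (hN : 0 < N) (hθ : 0 < θ) (hσ : 0 < σ)
    (X W : Ω → ℝ) (hX : Measurable X) (hW : Measurable W)
    (hindep : IndepFun X W P)
    (hXlaw : Measure.map X P = expLocMeasure μ (σ / m))
    (hWlaw : Measure.map W P = gammaScaleMeasure N θ) :
    (∀ φ : ℝ, p * φ * θ / σ < 1 →
      linexRisk P p μ σ (fun ω => X ω + φ * W ω) ≠ ⊤) ∧
    p * ((σ / (p * θ)) * (1 - (m / (m - p)) ^ ((1 : ℝ) / (N + 1)))) * θ / σ < 1 ∧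
    (∀ φ : ℝ, p * φ * θ / σ < 1 →
      φ ≠ (σ / (p * θ)) * (1 - (m / (m - p)) ^ ((1 : ℝ) / (N + 1))) →
      linexRisk P p μ σ
          (fun ω => X ω + ((σ / (p * θ)) * (1 - (m / (m - p)) ^ ((1 : ℝ) / (N + 1)))) * W ω) <
        linexRisk P p μ σ (fun ω => X ω + φ * W ω)) := by
  have hA : 0 < m / (m - p) := div_pos hm (by linarith)
  have hrisk := fun φ (hφ : p * φ * θ / σ < 1) =>
    integrable_and_integral_linexLoss_of_expLocMeasure ⟨hX.aemeasurable, hXlaw⟩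
      ⟨hW.aemeasurable, hWlaw⟩ hindep hm hpm hN hθ hσ hφ
  set φs := σ / (p * θ) * (1 - (m / (m - p)) ^ ((1 : ℝ) / (N + 1)))
  have hroot : 1 - p * φs * θ / σ = (m / (m - p)) ^ ((1 : ℝ) / (N + 1)) := by
    simp only [φs]
    field_simp
    ring
  have hφs : p * φs * θ / σ < 1 := by linarith [rpow_pos_of_pos hA ((1 : ℝ) / (N + 1))]
  refine ⟨fun φ hφ => ?_, hφs, fun φ hφ hne => ?_⟩
  · rw [linexRisk_eq_ofReal_integral (hrisk φ hφ).1]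
    exact ENNReal.ofReal_ne_top
  obtain ⟨hint_min, hval_min⟩ := hrisk φs hφs
  obtain ⟨hint, hval⟩ := hrisk φ hφ
  have hu_ne : 1 - p * φ * θ / σ ≠ (m / (m - p)) ^ ((1 : ℝ) / (N + 1)) := by
    rw [← hroot]
    intro h
    have hc : p * θ / σ ≠ 0 := div_ne_zero (mul_ne_zero hp hθ.ne') hσ.ne'
    exact hne (mul_left_cancel₀ hc (by linear_combination -h))
  rw [linexRisk_eq_ofReal_integral hint_min, linexRisk_eq_ofReal_integral hint,
    ENNReal.ofReal_lt_ofReal_iff_of_nonneg (integral_nonneg fun _ => linexLoss_nonneg _ _),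
    hval_min, hval, hroot, mul_rpow_neg_add_mul_rpow_one_div hA (by linarith)]
  linarith [add_one_mul_rpow_one_div_lt hA hN (by linarith) hu_ne]
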